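/- Any product of I-favorable spaces is I-favorable: if X_α is I-favorable for each α ∈ T, then the product ∏_{α∈T} X_α with the product topology is I-favorable. -/

import Mathlib

open Set TopologicalSpace

variable (X : Type*) [TopologicalSpace X]

/-- A valid move of Player I: a finite family of nonempty open sets. -/
def IMove (A : Set (Set X)) : Prop :=
  A.Finite ∧ ∀ U ∈ A, IsOpen U ∧ U.Nonempty

/-- A valid response of Player II to the family `A`: a finite family of nonempty
open sets such that every member of `A` contains some member of `B`. -/
def IIMove (A B : Set (Set X)) : Prop :=
  IMove X B ∧ ∀ U ∈ A, ∃ V ∈ B, V ⊆ U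

/-- `X` is I-favorable: Player I has a winning strategy in the finite open-open
game. A strategy is a function from histories of Player II's moves to the next
move of Player I; it is winning if for every play in which Player II always
responds validly, each tail union of Player II's families is dense. -/
def IFavorable : Prop :=
  ∃ σ : List (Set (Set X)) → Set (Set X),
    (∀ hist, IMove X (σ hist)) ∧
    ∀ B : ℕ → Set (Set X),
      (∀ n, IIMove X (σ ((List.range n).map B)) (B n)) →
      ∀ k, Dense (⋃ (n : ℕ) (_ : k ≤ n), ⋃₀ B n)

/-- Player II has a winning strategy in the finite open-open game: a function
from histories of Player I's moves to responses of Player II which are valid,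
and such that whenever Player I plays validly, some tail union of Player II's
families fails to be dense. -/
def IIFavorable : Prop :=
  ∃ τ : List (Set (Set X)) → Set (Set X),
    ∀ A : ℕ → Set (Set X), (∀ n, IMove X (A n)) →
      (∀ n, IIMove X (A n) (τ ((List.range (n + 1)).map A))) ∧
      ∃ k, ¬ Dense (⋃ (n : ℕ) (_ : k ≤ n), ⋃₀ τ ((List.range (n + 1)).map A))

/-- `Q` is a π-base for `X`: a family of nonempty open sets such that every
nonempty open set contains a member of the family. -/
def IsPiBase (Q : Set (Set X)) : Prop :=
  (∀ U ∈ Q, IsOpen U ∧ U.Nonempty) ∧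
  ∀ V : Set X, IsOpen V → V.Nonempty → ∃ U ∈ Q, U ⊆ V

/-- `C` is a club filter with respect to the π-base `Q`. -/
def IsClubFilter (Q : Set (Set X)) (C : Set (Set (Set X))) : Prop :=
  (∀ P ∈ C, P.Countable ∧ P ⊆ Q) ∧
  (∀ P : ℕ → Set (Set X), (∀ n, P n ∈ C) → Monotone P → (⋃ n, P n) ∈ C) ∧
  (∀ A : Set (Set X), A.Countable → A ⊆ Q → ∃ P ∈ C, A ⊆ P) ∧
  (∀ V : Set X, IsOpen V → V.Nonempty →
    ∀ P ∈ C, ∃ W ∈ P, ∀ U ∈ P, U ⊆ W → (U ∩ V).Nonempty)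

/-!
A space is I-favorable exactly when it carries a club filter, and both directions are used.
If `σ` is a winning strategy, the countable families of nonempty open sets that contain `univ`
and are closed under `σ` form a club filter: were such a family `P` not to reflect an open set
`V`, Player II could answer every move inside `P` by sets missing `V`. Conversely, from a club
filter Player I wins by keeping an increasing chain of members absorbing Player II's answers and
eventually playing each member of each of them; reflection in the union of the chain makes the
answers dense.

For a product, take the families of finitely supported boxes whose coordinates range over
members `R α` of the factor club filters, with `R α = {univ}` off a countable set of coordinates.
Reflection is checked separately in each of the finitely many coordinates of a basic open set.
-/

open Filter Function

variable {X}

theorem exists_seq_eq_apply_prefix {α : Type*} (τ : List α → α) :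
    ∃ B : ℕ → α, ∀ n, B n = τ ((List.range n).map B) := by
  let H : ℕ → List α := fun n => Nat.rec [] (fun _ l => l ++ [τ l]) n
  refine ⟨fun n => τ (H n), fun n => congrArg τ ?_⟩
  induction n with
  | zero => rfl
  | succ n ih => rw [List.range_succ, List.map_append, ← ih]; rfl

theorem Monotone.eventually_subset_of_finite {α : Type*} {P : ℕ → Set α} (hP : Monotone P)
    {b : Set α} (hb : b.Finite) (hbP : b ⊆ ⋃ n, P n) : ∀ᶠ n in atTop, b ⊆ P n :=
  (eventually_all_finite hb).2 fun _ hx =>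
    let ⟨n, hn⟩ := mem_iUnion.1 (hbP hx)
    eventually_atTop.2 ⟨n, fun _ hm => hP hm hn⟩

theorem Monotone.exists_forall_mem_list_subset {α : Type*} {P : ℕ → Set α} (hP : Monotone P)
    {l : List (Set α)} (hl : ∀ b ∈ l, b.Finite ∧ b ⊆ ⋃ n, P n) :
    ∃ n, ∀ b ∈ l, b.Finite ∧ b ⊆ P n :=
  ((eventually_all_finite l.finite_toSet).2 fun b hb =>
    (hP.eventually_subset_of_finite (hl b hb).1 (hl b hb).2).mono
      fun _ hn => ⟨(hl b hb).1, hn⟩).exists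

theorem countable_setOf_forall_mem_list_finite_subset {α : Type*} {P : Set α}
    (hP : P.Countable) : {l : List (Set α) | ∀ b ∈ l, b.Finite ∧ b ⊆ P}.Countable := by
  have := (countable_ofPred_finite_subset hP).to_subtype
  exact range_list_map_coe {b | b.Finite ∧ b ⊆ P} ▸ countable_range _

theorem exists_countable_superset_closed {α : Type*} {S : Set α} (F : Set α → Set α)
    (hFS : ∀ P, F P ⊆ S) (hFc : ∀ P, P.Countable → (F P).Countable)
    (hF : ∀ P : ℕ → Set α, Monotone P → F (⋃ n, P n) ⊆ ⋃ n, F (P n))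
    {A : Set α} (hA : A.Countable) (hAS : A ⊆ S) :
    ∃ P, A ⊆ P ∧ P ⊆ S ∧ P.Countable ∧ F P ⊆ P := by
  let P : ℕ → Set α := fun n => (fun P => P ∪ F P)^[n] A
  have hsucc : ∀ n, P (n + 1) = P n ∪ F (P n) := fun n => iterate_succ_apply' _ n A
  have hmono : Monotone P := monotone_nat_of_le_succ fun n => (hsucc n).symm ▸ subset_union_left
  have hPS : ∀ n, P n ⊆ S ∧ (P n).Countable := by
    intro n
    induction n with
    | zero => exact ⟨hAS, hA⟩
    | succ n ih => rw [hsucc]; exact ⟨union_subset ih.1 (hFS _), ih.2.union (hFc _ ih.2)⟩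
  refine ⟨⋃ n, P n, subset_iUnion P 0, iUnion_subset fun n => (hPS n).1,
    countable_iUnion fun n => (hPS n).2, (hF P hmono).trans (iUnion_mono' fun n => ⟨n + 1, ?_⟩)⟩
  rw [hsucc]
  exact subset_union_right

theorem countable_setOf_finite_ne {ι : Type*} {β : ι → Type*} {R : ∀ i, Set (β i)}
    (b : ∀ i, β i) (hR : ∀ i, (R i).Countable) (hsupp : {i | R i ≠ {b i}}.Countable) :
    {w : ∀ i, β i | (∀ i, w i ∈ R i) ∧ {i | w i ≠ b i}.Finite}.Countable := by
  let graph : (∀ i, β i) → Set (Σ i, β i) := fun w => (fun i => ⟨i, w i⟩) '' {i | w i ≠ b i}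
  have hgraph : ∀ w w', graph w ⊆ graph w' → ∀ i, w i ≠ b i → w' i = w i := by
    intro w w' h i hi
    obtain ⟨j, -, hj⟩ := h ⟨i, hi, rfl⟩
    obtain ⟨rfl, hj⟩ := Sigma.mk.inj_iff.1 hj
    exact eq_of_heq hj
  have hD : (⋃ i ∈ {i | R i ≠ {b i}}, Sigma.mk i '' R i).Countable :=
    hsupp.biUnion fun i _ => (hR i).image _
  refine MapsTo.countable_of_injOn (f := graph) ?_ ?_ (countable_ofPred_finite_subset hD)
  · rintro w ⟨hwR, hfin⟩
    refine ⟨hfin.image _, ?_⟩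
    rintro _ ⟨i, hi, rfl⟩
    exact mem_biUnion (fun h => hi (by simpa [h] using hwR i)) (mem_image_of_mem _ (hwR i))
  · intro w _ w' _ h
    funext i
    by_cases hi : w i = b i
    · by_cases hi' : w' i = b i
      · rw [hi, hi']
      · exact hgraph w' w h.ge i hi'
    · exact (hgraph w w' h.le i hi).symm

def IsStrategyClosed {α : Type*} (σ : List (Set α) → Set α) (P : Set α) : Prop :=
  ∀ l : List (Set α), (∀ b ∈ l, b.Finite ∧ b ⊆ P) → σ l ⊆ P

theorem IsStrategyClosed.iUnion {α : Type*} {σ : List (Set α) → Set α} {P : ℕ → Set α}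
    (hmono : Monotone P) (hP : ∀ n, IsStrategyClosed σ (P n)) :
    IsStrategyClosed σ (⋃ n, P n) := fun l hl =>
  let ⟨n, hn⟩ := hmono.exists_forall_mem_list_subset hl
  (hP n l hn).trans (subset_iUnion P n)

def IsWinningStrategy (σ : List (Set (Set X)) → Set (Set X)) : Prop :=
  (∀ hist, IMove X (σ hist)) ∧
    ∀ B : ℕ → Set (Set X), (∀ n, IIMove X (σ ((List.range n).map B)) (B n)) →
      ∀ k, Dense (⋃ (n : ℕ) (_ : k ≤ n), ⋃₀ B n)

theorem exists_countable_isStrategyClosed [Nonempty X] {σ : List (Set (Set X)) → Set (Set X)}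
    (hσ : ∀ hist, IMove X (σ hist)) {A : Set (Set X)} (hA : A.Countable)
    (hAS : ∀ U ∈ A, IsOpen U ∧ U.Nonempty) :
    ∃ P, A ⊆ P ∧ (∀ U ∈ P, IsOpen U ∧ U.Nonempty) ∧ P.Countable ∧ univ ∈ P ∧
      IsStrategyClosed σ P := by
  let F : Set (Set X) → Set (Set X) := fun P =>
    insert univ (⋃ (l) (_ : ∀ b ∈ l, b.Finite ∧ b ⊆ P), σ l)
  have hσF : ∀ P l, (∀ b ∈ l, b.Finite ∧ b ⊆ P) → σ l ⊆ F P := fun _ l hl =>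
    (subset_iUnion₂ (s := fun l _ => σ l) l hl).trans (subset_insert _ _)
  obtain ⟨P, hAP, hPS, hPc, hFP⟩ := exists_countable_superset_closed
    (S := {U | IsOpen U ∧ U.Nonempty}) F
    (fun _ => insert_subset ⟨isOpen_univ, univ_nonempty⟩ (iUnion₂_subset fun l _ => (hσ l).2))
    (fun _ hP => ((countable_setOf_forall_mem_list_finite_subset hP).biUnion
      fun l _ => (hσ l).1.countable).insert univ)
    (fun P hmono => insert_subset (mem_iUnion.2 ⟨0, mem_insert _ _⟩) <| iUnion₂_subset fun l hl =>
      let ⟨n, hn⟩ := hmono.exists_forall_mem_list_subset hl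
      (hσF _ l hn).trans (subset_iUnion (fun n => F (P n)) n))
    hA hAS
  exact ⟨P, hAP, hPS, hPc, hFP (mem_insert _ _), fun l hl => (hσF P l hl).trans hFP⟩

theorem IsStrategyClosed.exists_reflect {σ : List (Set (Set X)) → Set (Set X)}
    (hσ : IsWinningStrategy σ) {P : Set (Set X)} (hPS : ∀ U ∈ P, IsOpen U ∧ U.Nonempty)
    (hP : IsStrategyClosed σ P) {V : Set X} (hV : IsOpen V) (hVne : V.Nonempty) :
    ∃ W ∈ P, ∀ U ∈ P, U ⊆ W → (U ∩ V).Nonempty := by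
  by_contra! hcon
  -- Otherwise Player II can shrink every move of Player I inside `P` away from `V`.
  choose! f hfP hfW hfV using hcon
  obtain ⟨B, hB⟩ := exists_seq_eq_apply_prefix fun l => f '' (σ l ∩ P)
  have hBP : ∀ n, (B n).Finite ∧ B n ⊆ P := fun n => by
    rw [hB n]
    exact ⟨((hσ.1 _).1.subset inter_subset_left).image f,
      image_subset_iff.2 fun U hU => hfP U hU.2⟩
  have hσP : ∀ n, σ ((List.range n).map B) ⊆ P := fun n => hP _ fun b hb => by
    obtain ⟨m, -, rfl⟩ := List.mem_map.1 hb
    exact hBP m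
  have hplay : ∀ n, IIMove X (σ ((List.range n).map B)) (B n) := fun n =>
    ⟨⟨(hBP n).1, fun U hU => hPS U ((hBP n).2 hU)⟩, fun U hU =>
      ⟨f U, hB n ▸ mem_image_of_mem f ⟨hU, hσP n hU⟩, hfW U (hσP n hU)⟩⟩
  obtain ⟨x, hxV, hx⟩ := (hσ.2 B hplay 0).inter_open_nonempty V hV hVne
  simp only [mem_iUnion, mem_sUnion] at hx
  obtain ⟨n, -, _, hU, hxU⟩ := hx
  rw [hB n] at hU
  obtain ⟨W, hW, rfl⟩ := hU
  exact (hfV W hW.2).subset ⟨hxU, hxV⟩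

theorem IFavorable.exists_isClubFilter [Nonempty X] (h : IFavorable X) :
    ∃ C, IsClubFilter X {U | IsOpen U ∧ U.Nonempty} C ∧ ∀ P ∈ C, univ ∈ P := by
  obtain ⟨σ, hσ⟩ := h
  refine ⟨{P | P.Countable ∧ (∀ U ∈ P, IsOpen U ∧ U.Nonempty) ∧ univ ∈ P ∧
    IsStrategyClosed σ P}, ⟨fun P hP => ⟨hP.1, hP.2.1⟩, ?_, ?_, ?_⟩, fun P hP => hP.2.2.1⟩
  · intro P hP hmono
    refine ⟨countable_iUnion fun n => (hP n).1, fun U hU => ?_, mem_iUnion.2 ⟨0, (hP 0).2.2.1⟩,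
      IsStrategyClosed.iUnion hmono fun n => (hP n).2.2.2⟩
    obtain ⟨n, hn⟩ := mem_iUnion.1 hU
    exact (hP n).2.1 U hn
  · intro A hA hAS
    obtain ⟨P, hAP, hPS, hPc, huniv, hP⟩ := exists_countable_isStrategyClosed hσ.1 hA hAS
    exact ⟨P, ⟨hPc, hPS, huniv, hP⟩, hAP⟩
  · exact fun V hV hVne P hP => hP.2.2.2.exists_reflect hσ hP.2.1 hV hVne

theorem IsClubFilter.insert_singleton_univ {Q : Set (Set X)} {C : Set (Set (Set X))}
    (hC : IsClubFilter X Q C) (hQ : univ ∈ Q) (huniv : ∀ P ∈ C, univ ∈ P) :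
    IsClubFilter X Q (insert {univ} C) := by
  obtain ⟨hcount, hunion, hcofinal, hreflect⟩ := hC
  refine ⟨?_, ?_, fun A hA hAQ => (hcofinal A hA hAQ).imp fun P hP =>
    ⟨mem_insert_of_mem _ hP.1, hP.2⟩, ?_⟩
  · rintro P (rfl | hP)
    · exact ⟨countable_singleton _, singleton_subset_iff.2 hQ⟩
    · exact hcount P hP
  · intro P hP hmono
    by_cases h : ∃ m, P m ∈ C
    · obtain ⟨m, hm⟩ := h
      -- A later stage equal to `{univ}` forces `P m = {univ}` as well.
      have htail : ∀ n, P (n + m) ∈ C := fun n => (hP (n + m)).elim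
        (fun h => h ▸ (subset_antisymm (h ▸ hmono (Nat.le_add_left m n))
          (singleton_subset_iff.2 (huniv _ hm))) ▸ hm) id
      rw [← hmono.iUnion_nat_add m]
      exact mem_insert_of_mem _ (hunion _ htail fun i j hij => hmono (by omega))
    · have hP' : ∀ n, P n = {univ} := fun n => (hP n).resolve_right (not_exists.1 h n)
      simp [hP']
  · rintro V hV hVne P (rfl | hP)
    · exact ⟨univ, rfl, fun U hU _ => by rw [mem_singleton_iff.1 hU, univ_inter]; exact hVne⟩
    · exact hreflect V hV hVne P hP

theorem IFavorable.of_isEmpty [IsEmpty X] : IFavorable X :=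
  ⟨fun _ => ∅, fun _ => ⟨finite_empty, fun _ h => h.elim⟩, fun _ _ _ x => isEmptyElim x⟩

theorem IsClubFilter.exists_step {Q : Set (Set X)} {C : Set (Set (Set X))}
    (hC : IsClubFilter X Q C) (hQ : IsPiBase X Q) :
    ∃ step : Set (Set X) → Set (Set X) → Set (Set X), ∀ P B, step P B ∈ C ∧
      (P ∈ C → IMove X B → P ⊆ step P B ∧ ∀ V ∈ B, ∃ U ∈ step P B, U ⊆ V) := by
  obtain ⟨hcount, -, hcofinal, -⟩ := hC
  choose! pick hpickQ hpickV using hQ.2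
  have : ∀ P B, ∃ P' ∈ C, P ∈ C → IMove X B → P ∪ pick '' B ⊆ P' := by
    intro P B
    by_cases hPB : P ∈ C ∧ IMove X B
    · refine (hcofinal _ ((hcount P hPB.1).1.union (hPB.2.1.image pick).countable)
        (union_subset (hcount P hPB.1).2 ?_)).imp fun P' hP' => ⟨hP'.1, fun _ _ => hP'.2⟩
      rintro _ ⟨V, hV, rfl⟩
      exact hpickQ V (hPB.2.2 V hV).1 (hPB.2.2 V hV).2
    · exact (hcofinal ∅ countable_empty (empty_subset _)).imp fun P' hP' =>
        ⟨hP'.1, fun h1 h2 => absurd ⟨h1, h2⟩ hPB⟩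
  choose step hstepC hstep using this
  refine ⟨step, fun P B => ⟨hstepC P B, fun hP hB => ⟨subset_union_left.trans (hstep P B hP hB),
    fun V hV => ⟨pick V, hstep P B hP hB (Or.inr (mem_image_of_mem pick hV)), ?_⟩⟩⟩⟩
  exact hpickV V (hB.2 V hV).1 (hB.2 V hV).2

theorem dense_iUnion_sUnion_of_reflect {P : Set (Set X)} {A B : ℕ → Set (Set X)} {k : ℕ}
    (hP : ∀ V, IsOpen V → V.Nonempty → ∃ W ∈ P, ∀ U ∈ P, U ⊆ W → (U ∩ V).Nonempty)
    (hplayed : ∀ W ∈ P, ∃ n ≥ k, W ∈ A n) (hB : ∀ n, ∀ W ∈ A n, ∃ V ∈ B n, V ⊆ W)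
    (hBP : ∀ n, ∀ V ∈ B n, ∃ U ∈ P, U ⊆ V) : Dense (⋃ (n : ℕ) (_ : k ≤ n), ⋃₀ B n) := by
  refine dense_iff_inter_open.2 fun V hV hVne => ?_
  obtain ⟨W, hW, hWV⟩ := hP V hV hVne
  obtain ⟨n, hkn, hWn⟩ := hplayed W hW
  obtain ⟨V', hV'B, hV'W⟩ := hB n W hWn
  obtain ⟨U, hU, hUV'⟩ := hBP n V' hV'B
  obtain ⟨x, hxU, hxV⟩ := hWV U hU (hUV'.trans hV'W)
  exact ⟨x, hxV, mem_iUnion₂.2 ⟨n, hkn, V', hV'B, hUV' hxU⟩⟩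

theorem IFavorable.of_isClubFilter {Q : Set (Set X)} {C : Set (Set (Set X))}
    (hQ : IsPiBase X Q) (hC : IsClubFilter X Q C) : IFavorable X := by
  obtain ⟨step, hstep⟩ := hC.exists_step hQ
  obtain ⟨hcount, hunion, -, hreflect⟩ := hC
  choose! enum henum using fun P (hP : P ∈ C) =>
    countable_iff_exists_subset_range.1 (hcount P hP).1
  -- Player I keeps a member of `C` absorbing the answers so far, and plays, at round `n`,
  -- the first `n + 1` members of the first `n + 1` families it has kept.
  let state : List (Set (Set X)) → Set (Set X) := fun hist => hist.foldl step (step ∅ ∅)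
  have hstate : ∀ hist, state hist ∈ C := by
    suffices ∀ (l : List (Set (Set X))) P, P ∈ C → l.foldl step P ∈ C from
      fun hist => this hist _ (hstep ∅ ∅).1
    intro l
    induction l with
    | nil => exact fun P hP => hP
    | cons b l ih => exact fun P _ => ih _ (hstep P b).1
  let σ : List (Set (Set X)) → Set (Set X) := fun hist =>
    {U | ∃ m ≤ hist.length, ∃ i ≤ hist.length,
      U ∈ state (hist.take m) ∧ U = enum (state (hist.take m)) i}
  refine ⟨σ, fun hist => ⟨?_, ?_⟩, fun B hB k => ?_⟩
  · refine ((finite_Iic hist.length).image2 (fun m i => enum (state (hist.take m)) i)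
      (finite_Iic hist.length)).subset ?_
    rintro U ⟨m, hm, i, hi, -, rfl⟩
    exact mem_image2_of_mem hm hi
  · rintro U ⟨m, -, i, -, hU, -⟩
    exact hQ.1 U ((hcount _ (hstate _)).2 hU)
  let S : ℕ → Set (Set X) := fun m => state ((List.range m).map B)
  have hgrow : ∀ m, S m ⊆ S (m + 1) ∧ ∀ V ∈ B m, ∃ U ∈ S (m + 1), U ⊆ V := fun m => by
    have hsucc : S (m + 1) = step (S m) (B m) := by
      simp only [S, state, List.range_succ, List.map_append, List.foldl_append]; rfl
    exact hsucc ▸ (hstep _ _).2 (hstate _) (hB m).1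
  refine dense_iUnion_sUnion_of_reflect (fun V hV hVne => hreflect V hV hVne _
    (hunion S (fun m => hstate _) (monotone_nat_of_le_succ fun m => (hgrow m).1)))
    (fun W hW => ?_) (fun n => (hB n).2) fun n V hV => ?_
  · obtain ⟨m, hWm⟩ := mem_iUnion.1 hW
    obtain ⟨j, rfl⟩ := henum _ (hstate _) hWm
    have htake : ((List.range (max k (max m j))).map B).take m = (List.range m).map B := by
      rw [← List.map_take, List.take_range, min_eq_left (by omega)]
    exact ⟨max k (max m j), le_max_left _ _, m, by simp, j, by simp, by rwa [htake], by rw [htake]⟩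
  · obtain ⟨U, hU, hUV⟩ := (hgrow n).2 V hV
    exact ⟨U, mem_iUnion_of_mem _ hU, hUV⟩

section Pi

variable {T : Type*} {Y : T → Type*}

def boxes (R : ∀ α, Set (Set (Y α))) : Set (Set (∀ α, Y α)) :=
  (fun w => univ.pi w) '' {w | (∀ α, w α ∈ R α) ∧ {α | w α ≠ univ}.Finite}

theorem boxes_mono {R R' : ∀ α, Set (Set (Y α))} (h : ∀ α, R α ⊆ R' α) : boxes R ⊆ boxes R' :=
  image_mono fun _ hw => ⟨fun α => h α (hw.1 α), hw.2⟩

theorem exists_forall_finite_ne_univ {p : ∀ α, Set (Y α) → Prop} {t : ∀ α, Set (Y α)}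
    (ht : {α | t α ≠ univ}.Finite) (hp : ∀ α, ∃ W, p α W) (huniv : ∀ α, t α = univ → p α univ) :
    ∃ w : ∀ α, Set (Y α), (∀ α, p α (w α)) ∧ {α | w α ≠ univ}.Finite := by
  classical
  choose W hW using hp
  refine ⟨fun α => if t α = univ then univ else W α, fun α => ?_,
    ht.subset fun α hα h => hα (by simp [h])⟩
  dsimp only
  split_ifs with h
  exacts [huniv α h, hW α]

theorem eval_image_univ_pi_of_mem {R : ∀ α, Set (Set (Y α))}
    (hR : ∀ α, ∀ u ∈ R α, u.Nonempty) {w : ∀ α, Set (Y α)} (hw : ∀ α, w α ∈ R α) (α : T) :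
    eval α '' univ.pi w = w α :=
  eval_image_univ_pi (univ_pi_nonempty_iff.2 fun β => hR β _ (hw β))

theorem subset_of_boxes_subset {R R' : ∀ α, Set (Set (Y α))} (huniv : ∀ α, univ ∈ R α)
    (hR : ∀ α, ∀ u ∈ R α, u.Nonempty) (hR' : ∀ α, ∀ u ∈ R' α, u.Nonempty)
    (h : boxes R ⊆ boxes R') (α : T) : R α ⊆ R' α := by
  classical
  intro u hu
  let w : ∀ β, Set (Y β) := update (fun _ => univ) α u
  have hw : ∀ β, w β ∈ R β := fun β => by
    rcases eq_or_ne β α with rfl | hβ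
    · simpa [w] using hu
    · simpa [w, hβ] using huniv β
  obtain ⟨w', ⟨hw'R', -⟩, hw'⟩ := h ⟨w, ⟨hw, (finite_singleton α).subset fun β hβ =>
    by_contra fun hβα => hβ (update_of_ne hβα _ _)⟩, rfl⟩
  have := eval_image_univ_pi_of_mem hR' hw'R' α
  simp only at hw'
  rw [hw', eval_image_univ_pi_of_mem hR hw α] at this
  have hwα : w α = u := update_self α u fun β => (univ : Set (Y β))
  exact hwα ▸ this ▸ hw'R' α

theorem iUnion_boxes {R : ℕ → ∀ α, Set (Set (Y α))} (huniv : ∀ n α, univ ∈ R n α)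
    (hmono : ∀ α, Monotone fun n => R n α) : ⋃ n, boxes (R n) = boxes fun α => ⋃ n, R n α := by
  refine subset_antisymm (iUnion_subset fun n => boxes_mono fun α => subset_iUnion (R · α) n) ?_
  rintro _ ⟨w, ⟨hwR, hfin⟩, rfl⟩
  obtain ⟨n, hn⟩ := ((eventually_all_finite hfin).2 fun α _ =>
    (hmono α).eventually_subset_of_finite (finite_singleton (w α))
      (singleton_subset_iff.2 (hwR α))).exists
  refine mem_iUnion.2 ⟨n, w, ⟨fun α => ?_, hfin⟩, rfl⟩
  by_cases hα : w α = univ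
  · exact hα ▸ huniv n α
  · exact singleton_subset_iff.1 (hn α hα)

variable [∀ α, TopologicalSpace (Y α)]

theorem isOpen_univ_pi_of_finite {w : ∀ α, Set (Y α)} (hw : ∀ α, IsOpen (w α))
    (hfin : {α | w α ≠ univ}.Finite) : IsOpen (univ.pi w) := by
  classical
  have hw' : univ.pi w = {α | w α ≠ univ}.pi w := by
    rw [← pi_univ_ite {α | w α ≠ univ} w]
    refine congrArg (pi univ) (funext fun α => ?_)
    split_ifs with h
    exacts [rfl, not_not.1 h]
  rw [hw']
  exact isOpen_set_pi hfin fun α _ => hw α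

theorem exists_univ_pi_subset {V : Set (∀ α, Y α)} (hV : IsOpen V) (hVne : V.Nonempty) :
    ∃ t : ∀ α, Set (Y α), (∀ α, IsOpen (t α) ∧ (t α).Nonempty) ∧ {α | t α ≠ univ}.Finite ∧
      univ.pi t ⊆ V := by
  classical
  obtain ⟨x, hx⟩ := hVne
  obtain ⟨I, u, hu, hIu⟩ := isOpen_pi_iff.1 hV x hx
  refine ⟨fun α => if α ∈ I then u α else univ, fun α => ?_,
    I.finite_toSet.subset fun α hα => by_contra fun h => hα (if_neg h),
    (pi_univ_ite _ u).trans_subset hIu⟩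
  dsimp only
  split_ifs with h
  exacts [⟨(hu α h).1, x α, (hu α h).2⟩, ⟨isOpen_univ, x α, mem_univ _⟩]

theorem IsPiBase.pi {Q : ∀ α, Set (Set (Y α))} (hQ : ∀ α, IsPiBase (Y α) (Q α))
    (huniv : ∀ α, univ ∈ Q α) : IsPiBase (∀ α, Y α) (boxes Q) := by
  refine ⟨?_, fun V hV hVne => ?_⟩
  · rintro _ ⟨w, ⟨hwQ, hfin⟩, rfl⟩
    exact ⟨isOpen_univ_pi_of_finite (fun α => ((hQ α).1 _ (hwQ α)).1) hfin,
      univ_pi_nonempty_iff.2 fun α => ((hQ α).1 _ (hwQ α)).2⟩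
  obtain ⟨t, ht, hfin, htV⟩ := exists_univ_pi_subset hV hVne
  obtain ⟨w, hw, hwfin⟩ := exists_forall_finite_ne_univ (p := fun α W => W ∈ Q α ∧ W ⊆ t α) hfin
    (fun α => (hQ α).2 _ (ht α).1 (ht α).2) fun α h => ⟨huniv α, h.symm ▸ subset_rfl⟩
  exact ⟨univ.pi w, ⟨w, ⟨fun α => (hw α).1, hwfin⟩, rfl⟩,
    (pi_mono fun α _ => (hw α).2).trans htV⟩

theorem exists_reflect_boxes {R : ∀ α, Set (Set (Y α))} (huniv : ∀ α, univ ∈ R α)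
    (hRne : ∀ α, ∀ u ∈ R α, u.Nonempty)
    (hR : ∀ α (V : Set (Y α)), IsOpen V → V.Nonempty →
      ∃ W ∈ R α, ∀ U ∈ R α, U ⊆ W → (U ∩ V).Nonempty)
    {V : Set (∀ α, Y α)} (hV : IsOpen V) (hVne : V.Nonempty) :
    ∃ W ∈ boxes R, ∀ U ∈ boxes R, U ⊆ W → (U ∩ V).Nonempty := by
  obtain ⟨t, ht, hfin, htV⟩ := exists_univ_pi_subset hV hVne
  obtain ⟨W, hW, hWfin⟩ := exists_forall_finite_ne_univ
    (p := fun α W => W ∈ R α ∧ ∀ U ∈ R α, U ⊆ W → (U ∩ t α).Nonempty) hfin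
    (fun α => hR α _ (ht α).1 (ht α).2)
    fun α h => ⟨huniv α, fun U hU _ => by rw [h, inter_univ]; exact hRne α U hU⟩
  refine ⟨univ.pi W, ⟨W, ⟨fun α => (hW α).1, hWfin⟩, rfl⟩, ?_⟩
  rintro _ ⟨u, ⟨huR, -⟩, rfl⟩ huW
  have hsub : ∀ α, u α ⊆ W α :=
    (univ_pi_subset_univ_pi_iff.1 huW).resolve_right fun ⟨α, hα⟩ =>
      (hRne α _ (huR α)).ne_empty hα
  refine (univ_pi_nonempty_iff.2 fun α => (hW α).2 _ (huR α) (hsub α)).mono ?_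
  rw [pi_inter_distrib]
  exact inter_subset_inter_right _ htV

def piClub (C : ∀ α, Set (Set (Set (Y α)))) : Set (Set (Set (∀ α, Y α))) :=
  {P | ∃ R : ∀ α, Set (Set (Y α)), (∀ α, R α ∈ C α) ∧ {α | R α ≠ {univ}}.Countable ∧
    P = boxes R}

variable {Q : ∀ α, Set (Set (Y α))} {C : ∀ α, Set (Set (Set (Y α)))}

theorem iUnion_mem_piClub (hQ : ∀ α, IsPiBase (Y α) (Q α))
    (hC : ∀ α, IsClubFilter (Y α) (Q α) (C α)) (huniv : ∀ α, ∀ P ∈ C α, univ ∈ P)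
    {P : ℕ → Set (Set (∀ α, Y α))} (hP : ∀ n, P n ∈ piClub C) (hmono : Monotone P) :
    ⋃ n, P n ∈ piClub C := by
  choose R hRC hsupp hPR using hP
  have hRne : ∀ n α, ∀ u ∈ R n α, u.Nonempty := fun n α u hu =>
    ((hQ α).1 u (((hC α).1 _ (hRC n α)).2 hu)).2
  have hRmono : ∀ α, Monotone fun n => R n α := fun α m n hmn =>
    subset_of_boxes_subset (fun α => huniv α _ (hRC m α)) (hRne m) (hRne n)
      (hPR m ▸ hPR n ▸ hmono hmn) α
  refine ⟨fun α => ⋃ n, R n α, fun α => (hC α).2.1 _ (fun n => hRC n α) (hRmono α),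
    (countable_iUnion hsupp).mono fun α hα => ?_, ?_⟩
  · by_contra h
    simp only [mem_iUnion, mem_ofPred_eq, not_exists, not_not] at h
    exact hα (by simp [h])
  · simp only [hPR]
    exact iUnion_boxes (fun n α => huniv α _ (hRC n α)) hRmono

theorem exists_mem_piClub_superset (hQ : ∀ α, IsPiBase (Y α) (Q α))
    (hC : ∀ α, IsClubFilter (Y α) (Q α) (C α)) (hsingle : ∀ α, {univ} ∈ C α)
    {A : Set (Set (∀ α, Y α))} (hA : A.Countable) (hAQ : A ⊆ boxes Q) :
    ∃ P ∈ piClub C, A ⊆ P := by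
  classical
  have hQne : ∀ α, ∀ u ∈ Q α, u.Nonempty := fun α u hu => ((hQ α).1 u hu).2
  let trace : ∀ α, Set (Set (Y α)) := fun α => (eval α '' ·) '' A
  have htrace : ∀ α, trace α ⊆ Q α := by
    rintro α _ ⟨_, ha, rfl⟩
    obtain ⟨w, ⟨hwQ, -⟩, rfl⟩ := hAQ ha
    simpa only [eval_image_univ_pi_of_mem hQne hwQ] using hwQ α
  choose E hEC hAE using fun α => (hC α).2.2.1 (trace α) (hA.image _) (htrace α)
  -- Only the countably many coordinates on which some member of `A` is nontrivial are enlarged.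
  let R : ∀ α, Set (Set (Y α)) := fun α => if trace α ⊆ {univ} then {univ} else E α
  refine ⟨boxes R, ⟨R, fun α => ?_, ?_, rfl⟩, ?_⟩
  · dsimp only [R]
    split_ifs
    exacts [hsingle α, hEC α]
  · refine (hA.biUnion fun a ha => (?_ : {α | eval α '' a ≠ univ}.Finite).countable).mono ?_
    · obtain ⟨w, ⟨hwQ, hfin⟩, rfl⟩ := hAQ ha
      simpa only [eval_image_univ_pi_of_mem hQne hwQ] using hfin
    · intro α hα
      obtain ⟨_, ⟨a, ha, rfl⟩, hne⟩ := not_subset.1 fun h => hα (if_pos h)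
      exact mem_biUnion ha hne
  · intro a ha
    obtain ⟨w, ⟨hwQ, hfin⟩, rfl⟩ := hAQ ha
    refine ⟨w, ⟨fun α => ?_, hfin⟩, rfl⟩
    have hw : w α ∈ trace α := ⟨_, ha, eval_image_univ_pi_of_mem hQne hwQ α⟩
    dsimp only [R]
    split_ifs with h
    exacts [h hw, hAE α hw]

theorem IsClubFilter.pi (hQ : ∀ α, IsPiBase (Y α) (Q α))
    (hC : ∀ α, IsClubFilter (Y α) (Q α) (C α)) (hsingle : ∀ α, {univ} ∈ C α)
    (huniv : ∀ α, ∀ P ∈ C α, univ ∈ P) : IsClubFilter (∀ α, Y α) (boxes Q) (piClub C) := by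
  have hRne : ∀ {R : ∀ α, Set (Set (Y α))}, (∀ α, R α ∈ C α) → ∀ α, ∀ u ∈ R α, u.Nonempty :=
    fun hR α u hu => ((hQ α).1 u (((hC α).1 _ (hR α)).2 hu)).2
  refine ⟨?_, fun P hP hmono => iUnion_mem_piClub hQ hC huniv hP hmono,
    fun A hA hAQ => exists_mem_piClub_superset hQ hC hsingle hA hAQ, ?_⟩
  · rintro _ ⟨R, hRC, hsupp, rfl⟩
    exact ⟨(countable_setOf_finite_ne (fun _ => univ) (fun α => ((hC α).1 _ (hRC α)).1)
      hsupp).image _, boxes_mono fun α => ((hC α).1 _ (hRC α)).2⟩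
  · rintro V hV hVne _ ⟨R, hRC, -, rfl⟩
    exact exists_reflect_boxes (fun α => huniv α _ (hRC α)) (hRne hRC)
      (fun α V hV hVne => (hC α).2.2.2 V hV hVne _ (hRC α)) hV hVne

end Pi

/-- Any product of I-favorable spaces is I-favorable. -/
theorem iFavorable_pi {T : Type*} (Xf : T → Type*)
    [∀ α, TopologicalSpace (Xf α)] (h : ∀ α, IFavorable (Xf α)) :
    IFavorable (∀ α, Xf α) := by
  rcases isEmpty_or_nonempty (∀ α, Xf α) with hX | hX
  · exact IFavorable.of_isEmpty
  obtain ⟨x⟩ := hX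
  have : ∀ α, Nonempty (Xf α) := fun α => ⟨x α⟩
  choose C hC huniv using fun α => (h α).exists_isClubFilter
  have hQ : ∀ α, IsPiBase (Xf α) {U | IsOpen U ∧ U.Nonempty} := fun _ =>
    ⟨fun _ hU => hU, fun V hV hVne => ⟨V, ⟨hV, hVne⟩, subset_rfl⟩⟩
  have hQuniv : ∀ α, univ ∈ {U : Set (Xf α) | IsOpen U ∧ U.Nonempty} := fun _ =>
    ⟨isOpen_univ, univ_nonempty⟩
  refine IFavorable.of_isClubFilter (IsPiBase.pi hQ hQuniv)
    (IsClubFilter.pi hQ (fun α => (hC α).insert_singleton_univ (hQuniv α) (huniv α))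
      (fun α => mem_insert _ _) fun α => ?_)
  rintro P (rfl | hP)
  exacts [mem_singleton _, huniv α P hP]
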